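/- If L₁ and L₂ are trace-class integral operators on a simple closed contour Γ such that the kernel L₁(η,η') extends analytically in η' to the inside of Γ, and L₂(η,η') extends analytically in both η and η' to the inside of Γ, then L₁L₂ = 0, L₂² = 0, tr L₂ = 0, and tr(L₁+L₂)ⁿ = tr L₁ⁿ for all n ≥ 1; hence det(I − (L₁+L₂)) = det(I − L₁). -/

import Mathlib

/-!
Cauchy's theorem kills every composition `K L` in which `K(η, ·)` extends holomorphically into
the disc and `L(·, η'')` does too; in particular `L₁ L₂ = 0` and `L₂ L₂ = 0`. Associativity of
kernel composition (Fubini on the torus) then gives `(L₁ + L₂)ⁿ⁺¹ = L₁ⁿ⁺¹ + L₂ L₁ⁿ` and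
`L₁ⁿ L₂ = 0`, so by cyclicity of the trace `tr (L₂ L₁ⁿ) = tr (L₁ⁿ L₂) = 0`.

The remaining term `tr L₂ = ∮ L₂(η, η) dη` needs another argument, since the diagonal of a
separately holomorphic extension `G` is not known to be holomorphic. For `c < 1`, Cauchy's formula
in the second variable writes `G(η, cη)` as `∮ (s - cη)⁻¹ L₂(η, s) ds / 2πi`; swapping the two
integrals, the inner one is holomorphic in `η`, so `∮ G(η, cη) dη = 0`. By the maximum principle
`G(η, cη)` is bounded uniformly in `c ∈ [0, 1]`, and dominated convergence lets `c → 1`.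
-/

open Complex

/-- Composition of integral kernels on the circle |η| = ρ with measure dζ/(2πi). -/
noncomputable def kComp (ρ : ℝ) (K L : ℂ → ℂ → ℂ) : ℂ → ℂ → ℂ :=
  fun η η'' => (2 * ↑Real.pi * I)⁻¹ * ∮ ζ in C(0, ρ), K η ζ * L ζ η''

/-- `kPow ρ K n` is the kernel of the (n+1)-st power of the integral operator with
kernel K. -/
noncomputable def kPow (ρ : ℝ) (K : ℂ → ℂ → ℂ) : ℕ → ℂ → ℂ → ℂ
  | 0 => K
  | n + 1 => kComp ρ K (kPow ρ K n)

/-- Trace of an integral operator on the circle |η| = ρ. -/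
noncomputable def kTrace (ρ : ℝ) (K : ℂ → ℂ → ℂ) : ℂ :=
  (2 * ↑Real.pi * I)⁻¹ * ∮ η in C(0, ρ), K η η

open Metric Set MeasureTheory Function

section CircleIntegral

variable {E : Type*} [NormedAddCommGroup E] [NormedSpace ℂ E]

theorem circleIntegral_eq_zero_of_eqOn_sphere {c : ℂ} {R : ℝ} (hR : 0 ≤ R) {f g : ℂ → E}
    (hg : DifferentiableOn ℂ g (closedBall c R)) (hfg : EqOn f g (sphere c R)) :
    ∮ z in C(c, R), f z = 0 := by
  rw [circleIntegral.integral_congr hR hfg]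
  exact (hg.mono closure_ball_subset_closedBall).diffContOnCl.circleIntegral_eq_zero hR

theorem norm_le_of_forall_mem_sphere_norm_le {f : ℂ → E} {c : ℂ} {R C : ℝ} (hR : R ≠ 0)
    (hf : DifferentiableOn ℂ f (closedBall c R)) (hC : ∀ z ∈ sphere c R, ‖f z‖ ≤ C) {z : ℂ}
    (hz : z ∈ closedBall c R) : ‖f z‖ ≤ C :=
  Complex.norm_le_of_forall_mem_frontier_norm_le isBounded_ball
    (hf.mono closure_ball_subset_closedBall).diffContOnCl (by rwa [frontier_ball c hR])
    (by rwa [closure_ball c hR])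

theorem continuousOn_circleIntegral_of_bound {X : Type*} [TopologicalSpace X]
    [FirstCountableTopology X] {F : ℂ → X → E} {T : Set X} {c : ℂ} {R B : ℝ} (hR : 0 ≤ R)
    (hF : ∀ z ∈ sphere c R, ContinuousOn (F z) T)
    (hF' : ∀ x ∈ T, ContinuousOn (fun z => F z x) (sphere c R))
    (hB : ∀ z ∈ sphere c R, ∀ x ∈ T, ‖F z x‖ ≤ B) :
    ContinuousOn (fun x => ∮ z in C(c, R), F z x) T := by
  intro x₀ hx₀
  refine intervalIntegral.continuousWithinAt_of_dominated_interval (bound := fun _ => R * B)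
    ?_ ?_ intervalIntegrable_const (ae_of_all _ fun θ _ => ?_)
  · filter_upwards [self_mem_nhdsWithin] with x hx
    exact ((hF' x hx).circleIntegrable hR).out.def'.aestronglyMeasurable
  · filter_upwards [self_mem_nhdsWithin] with x hx
    refine ae_of_all _ fun θ _ => ?_
    simp only [deriv_circleMap, norm_smul, norm_mul, norm_circleMap_zero, abs_of_nonneg hR,
      Complex.norm_I, mul_one]
    exact mul_le_mul_of_nonneg_left (hB _ (circleMap_mem_sphere c hR θ) x hx) hR
  · exact ((hF _ (circleMap_mem_sphere c hR θ)) x₀ hx₀).const_smul _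

theorem continuousOn_circleIntegral_of_isCompact {X : Type*} [TopologicalSpace X]
    [FirstCountableTopology X] {F : X → ℂ → E} {T : Set X} {c : ℂ} {R : ℝ} (hR : 0 ≤ R)
    (hT : IsCompact T) (hF : ContinuousOn (uncurry F) (T ×ˢ sphere c R)) :
    ContinuousOn (fun x => ∮ z in C(c, R), F x z) T := by
  obtain ⟨B, hB⟩ := (hT.prod (isCompact_sphere c R)).exists_bound_of_continuousOn hF
  exact continuousOn_circleIntegral_of_bound hR (fun z hz => hF.uncurry_right z hz)
    (fun x hx => hF.uncurry_left x hx) fun z hz x hx => hB (x, z) ⟨hx, hz⟩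

theorem circleIntegral_comm {f : ℂ → ℂ → E} {c c' : ℂ} {R R' : ℝ} (hR : 0 ≤ R) (hR' : 0 ≤ R')
    (hf : ContinuousOn (uncurry f) (sphere c R ×ˢ sphere c' R')) :
    (∮ z in C(c, R), ∮ w in C(c', R'), f z w) = ∮ w in C(c', R'), ∮ z in C(c, R), f z w := by
  have hcont : Continuous (uncurry fun θ φ : ℝ => deriv (circleMap c R) θ •
      deriv (circleMap c' R') φ • f (circleMap c R θ) (circleMap c' R' φ)) := by
    have hf' := hf.comp_continuous (((continuous_circleMap c R).comp continuous_fst).prodMk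
      ((continuous_circleMap c' R').comp continuous_snd))
      fun p => ⟨circleMap_mem_sphere c hR p.1, circleMap_mem_sphere c' hR' p.2⟩
    simp only [deriv_circleMap]
    exact (((continuous_circleMap 0 R).comp continuous_fst).mul continuous_const).smul
      ((((continuous_circleMap 0 R').comp continuous_snd).mul continuous_const).smul hf')
  have hint := (hcont.continuousOn.integrableOn_compact (μ := volume)
      (isCompact_uIcc.prod isCompact_uIcc)).mono_set
      (prod_mono (uIoc_subset_uIcc (a := 0) (b := 2 * Real.pi))
        (uIoc_subset_uIcc (a := 0) (b := 2 * Real.pi)))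
  unfold circleIntegral
  simp only [← intervalIntegral.integral_smul]
  rw [intervalIntegral_intervalIntegral_swap hint]
  simp only [smul_comm (deriv (circleMap c R) _)]

theorem eq_two_pi_I_inv_smul_circleIntegral_of_eqOn [CompleteSpace E] {f g : ℂ → E}
    {c w : ℂ} {R : ℝ} (hR : 0 ≤ R) (hg : DifferentiableOn ℂ g (closedBall c R))
    (hfg : EqOn f g (sphere c R)) (hw : w ∈ ball c R) :
    g w = (2 * ↑Real.pi * I)⁻¹ • ∮ z in C(c, R), (z - w)⁻¹ • f z := by
  rw [circleIntegral.integral_congr hR fun z hz => congrArg _ (hfg hz)]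
  exact ((hg.mono closure_ball_subset_closedBall).diffContOnCl
    |>.two_pi_i_inv_smul_circleIntegral_sub_inv_smul hw).symm

end CircleIntegral

abbrev torus (ρ : ℝ) : Set (ℂ × ℂ) := sphere 0 ρ ×ˢ sphere 0 ρ

theorem isCompact_torus (ρ : ℝ) : IsCompact (torus ρ) :=
  (isCompact_sphere 0 ρ).prod (isCompact_sphere 0 ρ)

theorem circleIntegral_mul_const (f : ℂ → ℂ) (a c : ℂ) (R : ℝ) :
    (∮ z in C(c, R), f z * a) = (∮ z in C(c, R), f z) * a := by
  simpa only [mul_comm a] using circleIntegral.integral_const_mul a f c R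

section KernelAlgebra

variable {ρ : ℝ} {K K' L L' M : ℂ → ℂ → ℂ}

theorem continuousOn_kComp (hρ : 0 ≤ ρ) (hK : ContinuousOn (uncurry K) (torus ρ))
    (hL : ContinuousOn (uncurry L) (torus ρ)) :
    ContinuousOn (uncurry (kComp ρ K L)) (torus ρ) := by
  have hKL : ContinuousOn (fun q : (ℂ × ℂ) × ℂ => K q.1.1 q.2 * L q.2 q.1.2)
      (torus ρ ×ˢ sphere 0 ρ) :=
    (hK.comp (continuous_fst.fst.prodMk continuous_snd).continuousOn
      fun q (hq : q ∈ torus ρ ×ˢ sphere 0 ρ) => ⟨hq.1.1, hq.2⟩).mul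
    (hL.comp (continuous_snd.prodMk continuous_fst.snd).continuousOn
      fun q (hq : q ∈ torus ρ ×ˢ sphere 0 ρ) => ⟨hq.2, hq.1.2⟩)
  exact continuousOn_const.mul
    (continuousOn_circleIntegral_of_isCompact hρ (isCompact_torus ρ) hKL)

theorem continuousOn_kPow (hρ : 0 ≤ ρ) (hK : ContinuousOn (uncurry K) (torus ρ)) (n : ℕ) :
    ContinuousOn (uncurry (kPow ρ K n)) (torus ρ) := by
  induction n with
  | zero => exact hK
  | succ n ih => exact continuousOn_kComp hρ hK ih

theorem circleIntegrable_kComp (hρ : 0 ≤ ρ) (hK : ContinuousOn (uncurry K) (torus ρ))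
    (hL : ContinuousOn (uncurry L) (torus ρ)) {η η'' : ℂ} (hη : η ∈ sphere 0 ρ)
    (hη'' : η'' ∈ sphere 0 ρ) : CircleIntegrable (fun ζ => K η ζ * L ζ η'') 0 ρ :=
  ((hK.uncurry_left η hη).mul (hL.uncurry_right η'' hη'')).circleIntegrable hρ

theorem kComp_eqOn (hρ : 0 ≤ ρ) (hK : EqOn (uncurry K) (uncurry K') (torus ρ))
    (hL : EqOn (uncurry L) (uncurry L') (torus ρ)) :
    EqOn (uncurry (kComp ρ K L)) (uncurry (kComp ρ K' L')) (torus ρ) := by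
  rintro ⟨η, η''⟩ ⟨hη, hη''⟩
  simp only [uncurry_apply_pair, kComp]
  congr 1
  refine circleIntegral.integral_congr hρ fun ζ hζ => ?_
  exact congrArg₂ (· * ·) (hK (mk_mem_prod hη hζ)) (hL (mk_mem_prod hζ hη''))

theorem kComp_eqOn_zero_of_right (hρ : 0 ≤ ρ) (hL : EqOn (uncurry L) 0 (torus ρ)) :
    EqOn (uncurry (kComp ρ K L)) 0 (torus ρ) := by
  rintro ⟨η, η''⟩ ⟨hη, hη''⟩
  have h : EqOn (fun ζ => K η ζ * L ζ η'') 0 (sphere 0 ρ) := fun ζ hζ => by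
    simp [show L ζ η'' = 0 from hL (mk_mem_prod hζ hη'')]
  simp [kComp, circleIntegral_eq_zero_of_eqOn_sphere hρ (differentiableOn_const 0) h]

theorem kComp_eqOn_zero_of_left (hρ : 0 ≤ ρ) (hK : EqOn (uncurry K) 0 (torus ρ)) :
    EqOn (uncurry (kComp ρ K M)) 0 (torus ρ) := by
  rintro ⟨η, η''⟩ ⟨hη, hη''⟩
  have h : EqOn (fun ζ => K η ζ * M ζ η'') 0 (sphere 0 ρ) := fun ζ hζ => by
    simp [show K η ζ = 0 from hK (mk_mem_prod hη hζ)]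
  simp [kComp, circleIntegral_eq_zero_of_eqOn_sphere hρ (differentiableOn_const 0) h]

theorem kComp_add_left (hρ : 0 ≤ ρ) (hK : ContinuousOn (uncurry K) (torus ρ))
    (hK' : ContinuousOn (uncurry K') (torus ρ)) (hL : ContinuousOn (uncurry L) (torus ρ)) :
    EqOn (uncurry (kComp ρ (K + K') L)) (uncurry (kComp ρ K L + kComp ρ K' L)) (torus ρ) := by
  rintro ⟨η, η''⟩ ⟨hη, hη''⟩
  simp only [uncurry_apply_pair, Pi.add_apply, kComp, add_mul]
  rw [circleIntegral.integral_add (circleIntegrable_kComp hρ hK hL hη hη'')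
    (circleIntegrable_kComp hρ hK' hL hη hη''), mul_add]

theorem kComp_add_right (hρ : 0 ≤ ρ) (hK : ContinuousOn (uncurry K) (torus ρ))
    (hL : ContinuousOn (uncurry L) (torus ρ)) (hL' : ContinuousOn (uncurry L') (torus ρ)) :
    EqOn (uncurry (kComp ρ K (L + L'))) (uncurry (kComp ρ K L + kComp ρ K L')) (torus ρ) := by
  rintro ⟨η, η''⟩ ⟨hη, hη''⟩
  simp only [uncurry_apply_pair, Pi.add_apply, kComp, mul_add]
  rw [circleIntegral.integral_add (circleIntegrable_kComp hρ hK hL hη hη'')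
    (circleIntegrable_kComp hρ hK hL' hη hη''), mul_add]

theorem kComp_assoc (hρ : 0 ≤ ρ) (hK : ContinuousOn (uncurry K) (torus ρ))
    (hL : ContinuousOn (uncurry L) (torus ρ)) (hM : ContinuousOn (uncurry M) (torus ρ)) :
    EqOn (uncurry (kComp ρ K (kComp ρ L M))) (uncurry (kComp ρ (kComp ρ K L) M)) (torus ρ) := by
  rintro ⟨η, η''⟩ ⟨hη, hη''⟩
  have hKLM : ContinuousOn (uncurry fun ζ s => K η ζ * L ζ s * M s η'') (torus ρ) :=
    ((hK.uncurry_left η hη).comp continuousOn_fst fun q hq => hq.1).mul hL |>.mul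
      ((hM.uncurry_right η'' hη'').comp continuousOn_snd fun q hq => hq.2)
  have hleft (ζ : ℂ) : K η ζ * kComp ρ L M ζ η'' =
      (2 * ↑Real.pi * I)⁻¹ * ∮ s in C(0, ρ), K η ζ * L ζ s * M s η'' := by
    rw [kComp, mul_left_comm, ← circleIntegral.integral_const_mul]
    simp only [mul_assoc]
  have hright (s : ℂ) : kComp ρ K L η s * M s η'' =
      (2 * ↑Real.pi * I)⁻¹ * ∮ ζ in C(0, ρ), K η ζ * L ζ s * M s η'' := by
    rw [kComp, mul_assoc, ← circleIntegral_mul_const]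
  show (2 * ↑Real.pi * I)⁻¹ * ∮ ζ in C(0, ρ), K η ζ * kComp ρ L M ζ η'' =
    (2 * ↑Real.pi * I)⁻¹ * ∮ s in C(0, ρ), kComp ρ K L η s * M s η''
  simp only [hleft, hright, circleIntegral.integral_const_mul, circleIntegral_comm hρ hρ hKLM]

theorem kTrace_eq_of_eqOn (hρ : 0 ≤ ρ) (hKL : EqOn (uncurry K) (uncurry L) (torus ρ)) :
    kTrace ρ K = kTrace ρ L := by
  simp only [kTrace]
  congr 1
  exact circleIntegral.integral_congr hρ fun η hη => hKL (mk_mem_prod hη hη)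

@[simp]
theorem kTrace_zero : kTrace ρ 0 = 0 := by
  simp [kTrace, circleIntegral]

theorem kTrace_add (hρ : 0 ≤ ρ) (hK : ContinuousOn (uncurry K) (torus ρ))
    (hL : ContinuousOn (uncurry L) (torus ρ)) :
    kTrace ρ (K + L) = kTrace ρ K + kTrace ρ L := by
  have hdiag {K : ℂ → ℂ → ℂ} (hK : ContinuousOn (uncurry K) (torus ρ)) :
      CircleIntegrable (fun η => K η η) 0 ρ :=
    (hK.comp (continuous_id.prodMk continuous_id).continuousOn
      fun η hη => ⟨hη, hη⟩).circleIntegrable hρ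
  simp only [kTrace, Pi.add_apply, circleIntegral.integral_add (hdiag hK) (hdiag hL), mul_add]

theorem kTrace_kComp_comm (hρ : 0 ≤ ρ) (hK : ContinuousOn (uncurry K) (torus ρ))
    (hL : ContinuousOn (uncurry L) (torus ρ)) :
    kTrace ρ (kComp ρ K L) = kTrace ρ (kComp ρ L K) := by
  have hKL : ContinuousOn (uncurry fun η ζ => K η ζ * L ζ η) (torus ρ) :=
    hK.mul (hL.comp continuous_swap.continuousOn fun q hq => ⟨hq.2, hq.1⟩)
  simp only [kTrace, kComp, circleIntegral.integral_const_mul]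
  rw [circleIntegral_comm hρ hρ hKL]
  simp only [mul_comm (K _ _)]

end KernelAlgebra

section KernelPowers

variable {ρ : ℝ} {L₁ L₂ P R : ℂ → ℂ → ℂ}

theorem kComp_add_add_eqOn (hρ : 0 ≤ ρ) (h₁ : ContinuousOn (uncurry L₁) (torus ρ))
    (h₂ : ContinuousOn (uncurry L₂) (torus ρ)) (hP : ContinuousOn (uncurry P) (torus ρ))
    (hR : ContinuousOn (uncurry R) (torus ρ)) (h₁R : EqOn (uncurry (kComp ρ L₁ R)) 0 (torus ρ))
    (h₂R : EqOn (uncurry (kComp ρ L₂ R)) 0 (torus ρ)) :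
    EqOn (uncurry (kComp ρ (L₁ + L₂) (P + R))) (uncurry (kComp ρ L₁ P + kComp ρ L₂ P))
      (torus ρ) := by
  rintro ⟨η, η''⟩ hp
  have e := kComp_add_left (L := P + R) hρ h₁ h₂ ((hP.add hR).congr fun _ _ => rfl) hp
  have e₁ := kComp_add_right hρ h₁ hP hR hp
  have e₂ := kComp_add_right hρ h₂ hP hR hp
  have z₁ := h₁R hp
  have z₂ := h₂R hp
  simp only [uncurry_apply_pair, Pi.add_apply, Pi.zero_apply] at e e₁ e₂ z₁ z₂ ⊢
  rw [e, e₁, e₂, z₁, z₂, add_zero, add_zero]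

theorem kPow_add_eqOn (hρ : 0 ≤ ρ) (h₁ : ContinuousOn (uncurry L₁) (torus ρ))
    (h₂ : ContinuousOn (uncurry L₂) (torus ρ)) (h₁₂ : EqOn (uncurry (kComp ρ L₁ L₂)) 0 (torus ρ))
    (h₂₂ : EqOn (uncurry (kComp ρ L₂ L₂)) 0 (torus ρ)) (n : ℕ) :
    EqOn (uncurry (kPow ρ (L₁ + L₂) (n + 1)))
      (uncurry (kPow ρ L₁ (n + 1) + kComp ρ L₂ (kPow ρ L₁ n))) (torus ρ) := by
  induction n with
  | zero => exact kComp_add_add_eqOn hρ h₁ h₂ h₁ h₂ h₁₂ h₂₂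
  | succ n ih =>
    have hPn := continuousOn_kPow hρ h₁ n
    refine (kComp_eqOn hρ (eqOn_refl _ _) ih).trans (kComp_add_add_eqOn hρ h₁ h₂
      (continuousOn_kPow hρ h₁ (n + 1)) (continuousOn_kComp hρ h₂ hPn) ?_ ?_)
    · exact (kComp_assoc hρ h₁ h₂ hPn).trans (kComp_eqOn_zero_of_left hρ h₁₂)
    · exact (kComp_assoc hρ h₂ h₂ hPn).trans (kComp_eqOn_zero_of_left hρ h₂₂)

theorem kComp_kPow_eqOn_zero (hρ : 0 ≤ ρ) (h₁ : ContinuousOn (uncurry L₁) (torus ρ))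
    (h₂ : ContinuousOn (uncurry L₂) (torus ρ)) (h₁₂ : EqOn (uncurry (kComp ρ L₁ L₂)) 0 (torus ρ))
    (n : ℕ) : EqOn (uncurry (kComp ρ (kPow ρ L₁ n) L₂)) 0 (torus ρ) := by
  induction n with
  | zero => exact h₁₂
  | succ n ih =>
    exact (kComp_assoc hρ h₁ (continuousOn_kPow hρ h₁ n) h₂).symm.trans
      (kComp_eqOn_zero_of_right hρ ih)

theorem kTrace_kPow_add (hρ : 0 ≤ ρ) (h₁ : ContinuousOn (uncurry L₁) (torus ρ))
    (h₂ : ContinuousOn (uncurry L₂) (torus ρ)) (h₁₂ : EqOn (uncurry (kComp ρ L₁ L₂)) 0 (torus ρ))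
    (h₂₂ : EqOn (uncurry (kComp ρ L₂ L₂)) 0 (torus ρ)) (htr : kTrace ρ L₂ = 0) (n : ℕ) :
    kTrace ρ (kPow ρ (L₁ + L₂) n) = kTrace ρ (kPow ρ L₁ n) := by
  cases n with
  | zero => exact (kTrace_add hρ h₁ h₂).trans (by rw [htr, add_zero]; rfl)
  | succ n =>
    have hPn := continuousOn_kPow hρ h₁ n
    rw [kTrace_eq_of_eqOn hρ (kPow_add_eqOn hρ h₁ h₂ h₁₂ h₂₂ n),
      kTrace_add hρ (continuousOn_kPow hρ h₁ (n + 1)) (continuousOn_kComp hρ h₂ hPn),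
      kTrace_kComp_comm hρ h₂ hPn, kTrace_eq_of_eqOn hρ (L := 0)
        (kComp_kPow_eqOn_zero hρ h₁ h₂ h₁₂ n), kTrace_zero, add_zero]

end KernelPowers

section Holomorphic

variable {ρ : ℝ} {K L : ℂ → ℂ → ℂ}

def ExtendsHolomorphicallyInSnd (ρ : ℝ) (K : ℂ → ℂ → ℂ) : Prop :=
  ∀ η ∈ sphere (0 : ℂ) ρ, ∃ g : ℂ → ℂ,
    DifferentiableOn ℂ g (closedBall 0 ρ) ∧ EqOn g (K η) (sphere 0 ρ)

def ExtendsHolomorphicallyInFst (ρ : ℝ) (K : ℂ → ℂ → ℂ) : Prop :=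
  ∀ η' ∈ sphere (0 : ℂ) ρ, ∃ g : ℂ → ℂ,
    DifferentiableOn ℂ g (closedBall 0 ρ) ∧ EqOn g (fun η => K η η') (sphere 0 ρ)

theorem kComp_eqOn_zero_of_extendsHolomorphically (hρ : 0 ≤ ρ)
    (hK : ExtendsHolomorphicallyInSnd ρ K) (hL : ExtendsHolomorphicallyInFst ρ L) :
    EqOn (uncurry (kComp ρ K L)) 0 (torus ρ) := by
  rintro ⟨η, η''⟩ ⟨hη, hη''⟩
  obtain ⟨g, hg, hgK⟩ := hK η hη
  obtain ⟨h, hh, hhL⟩ := hL η'' hη''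
  have hzero := circleIntegral_eq_zero_of_eqOn_sphere hρ (hg.mul hh)
    fun ζ hζ => (congrArg₂ (· * ·) (hgK hζ) (hhL hζ)).symm
  simp [kComp, hzero]

theorem mul_mem_ball_of_norm_lt_one (hρ : 0 < ρ) {c η : ℂ} (hc : ‖c‖ < 1)
    (hη : η ∈ closedBall (0 : ℂ) ρ) : c * η ∈ ball (0 : ℂ) ρ := by
  rw [mem_closedBall_zero_iff] at hη
  rw [mem_ball_zero_iff, norm_mul]
  calc ‖c‖ * ‖η‖ ≤ ‖c‖ * ρ := by gcongr
    _ < ρ := by nlinarith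

theorem sub_mul_ne_zero_of_norm_lt_one (hρ : 0 < ρ) {c s η : ℂ} (hc : ‖c‖ < 1)
    (hs : s ∈ sphere (0 : ℂ) ρ) (hη : η ∈ closedBall (0 : ℂ) ρ) : s - c * η ≠ 0 :=
  sub_ne_zero.2 (sphere_disjoint_ball.ne_of_mem hs (mul_mem_ball_of_norm_lt_one hρ hc hη))

end Holomorphic

section DiagonalTrace

variable {ρ : ℝ} {K G : ℂ → ℂ → ℂ}

theorem continuousOn_inv_sub_mul_smul (hρ : 0 < ρ) (hK : ContinuousOn (uncurry K) (torus ρ))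
    {c : ℂ} (hc : ‖c‖ < 1) :
    ContinuousOn (uncurry fun η s => (s - c * η)⁻¹ • K η s) (torus ρ) :=
  ((continuous_snd.sub (continuous_const.mul continuous_fst)).continuousOn.inv₀
    fun _ hp => sub_mul_ne_zero_of_norm_lt_one hρ hc hp.2 (sphere_subset_closedBall hp.1)).smul hK

theorem eqOn_two_pi_I_inv_smul_circleIntegral (hρ : 0 < ρ)
    (hG₂ : ∀ η ∈ sphere (0 : ℂ) ρ, DifferentiableOn ℂ (G η) (closedBall 0 ρ))
    (hGK : EqOn (uncurry G) (uncurry K) (torus ρ)) {c : ℂ} (hc : ‖c‖ < 1) :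
    EqOn (fun η => G η (c * η))
      (fun η => (2 * ↑Real.pi * I)⁻¹ • ∮ s in C(0, ρ), (s - c * η)⁻¹ • K η s) (sphere 0 ρ) :=
  fun η hη => eq_two_pi_I_inv_smul_circleIntegral_of_eqOn hρ.le (hG₂ η hη)
    (fun _ hs => (hGK (mk_mem_prod hη hs)).symm)
    (mul_mem_ball_of_norm_lt_one hρ hc (sphere_subset_closedBall hη))

theorem circleIntegral_apply_mul_self_eq_zero (hρ : 0 < ρ)
    (hK : ContinuousOn (uncurry K) (torus ρ))
    (hG₁ : ∀ η' ∈ sphere (0 : ℂ) ρ, DifferentiableOn ℂ (fun η => G η η') (closedBall 0 ρ))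
    (hG₂ : ∀ η ∈ sphere (0 : ℂ) ρ, DifferentiableOn ℂ (G η) (closedBall 0 ρ))
    (hGK : EqOn (uncurry G) (uncurry K) (torus ρ)) {c : ℂ} (hc : ‖c‖ < 1) :
    ∮ η in C(0, ρ), G η (c * η) = 0 := by
  have hinner (s : ℂ) (hs : s ∈ sphere (0 : ℂ) ρ) : ∮ η in C(0, ρ), (s - c * η)⁻¹ • K η s = 0 :=
    circleIntegral_eq_zero_of_eqOn_sphere hρ.le (g := fun η => (s - c * η)⁻¹ • G η s)
      ((((differentiableOn_const s).sub ((differentiableOn_const c).mul differentiableOn_id)).inv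
        fun η hη => sub_mul_ne_zero_of_norm_lt_one hρ hc hs hη).smul (hG₁ s hs))
      fun η hη => congrArg _ (hGK (mk_mem_prod hη hs)).symm
  rw [circleIntegral.integral_congr hρ.le (eqOn_two_pi_I_inv_smul_circleIntegral hρ hG₂ hGK hc),
    circleIntegral.integral_smul,
    circleIntegral_comm hρ.le hρ.le (continuousOn_inv_sub_mul_smul hρ hK hc),
    circleIntegral_eq_zero_of_eqOn_sphere hρ.le (differentiableOn_const 0) hinner, smul_zero]

theorem continuousOn_circleIntegral_apply_mul_self (hρ : 0 < ρ)
    (hK : ContinuousOn (uncurry K) (torus ρ))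
    (hG₂ : ∀ η ∈ sphere (0 : ℂ) ρ, DifferentiableOn ℂ (G η) (closedBall 0 ρ))
    (hGK : EqOn (uncurry G) (uncurry K) (torus ρ)) :
    ContinuousOn (fun c : ℝ => ∮ η in C(0, ρ), G η (c * η)) (Icc 0 1) := by
  obtain ⟨M, hM⟩ := (isCompact_torus ρ).exists_bound_of_continuousOn hK
  have hmem (η : ℂ) (hη : η ∈ sphere (0 : ℂ) ρ) (c : ℝ) (hc : c ∈ Icc (0 : ℝ) 1) :
      (c : ℂ) * η ∈ closedBall (0 : ℂ) ρ := by
    rw [mem_closedBall_zero_iff, norm_mul, Complex.norm_real, Real.norm_of_nonneg hc.1,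
      mem_sphere_zero_iff_norm.1 hη]
    exact mul_le_of_le_one_left hρ.le hc.2
  refine continuousOn_circleIntegral_of_bound hρ.le (B := M) (fun η hη => ?_) (fun c hc => ?_)
    fun η hη c hc => ?_
  · exact (hG₂ η hη).continuousOn.comp (by fun_prop) (hmem η hη)
  · rcases hc.2.eq_or_lt with rfl | hc1
    · refine (hK.comp (continuous_id.prodMk continuous_id).continuousOn
        fun η hη => mk_mem_prod hη hη).congr fun η hη => ?_
      simpa using hGK (mk_mem_prod hη hη)
    · have hc' : ‖(c : ℂ)‖ < 1 := by rwa [Complex.norm_real, Real.norm_of_nonneg hc.1]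
      exact ((continuousOn_circleIntegral_of_isCompact hρ.le (isCompact_sphere 0 ρ)
        (continuousOn_inv_sub_mul_smul hρ hK hc')).fun_const_smul _).congr
        (eqOn_two_pi_I_inv_smul_circleIntegral hρ hG₂ hGK hc')
  · exact norm_le_of_forall_mem_sphere_norm_le hρ.ne' (hG₂ η hη)
      (fun z hz => (congrArg norm (hGK (mk_mem_prod hη hz))).trans_le
        (hM _ (mk_mem_prod hη hz))) (hmem η hη c hc)

theorem kTrace_eq_zero_of_separately_holomorphic (hρ : 0 < ρ)
    (hK : ContinuousOn (uncurry K) (torus ρ))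
    (hG₁ : ∀ η' ∈ sphere (0 : ℂ) ρ, DifferentiableOn ℂ (fun η => G η η') (closedBall 0 ρ))
    (hG₂ : ∀ η ∈ sphere (0 : ℂ) ρ, DifferentiableOn ℂ (G η) (closedBall 0 ρ))
    (hGK : EqOn (uncurry G) (uncurry K) (torus ρ)) : kTrace ρ K = 0 := by
  have hzero : EqOn (fun c : ℝ => ∮ η in C(0, ρ), G η (c * η)) 0 (Icc 0 1) :=
    EqOn.of_subset_closure (fun c hc => circleIntegral_apply_mul_self_eq_zero hρ hK hG₁ hG₂ hGK
        (by rw [Complex.norm_real, Real.norm_of_nonneg hc.1]; exact hc.2))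
      (continuousOn_circleIntegral_apply_mul_self hρ hK hG₂ hGK) continuousOn_const
      Ico_subset_Icc_self (closure_Ico zero_ne_one).ge
  have hdiag : EqOn (fun η => K η η) (fun η => G η ((1 : ℝ) * η)) (sphere 0 ρ) := fun η hη => by
    simpa using (hGK (mk_mem_prod hη hη)).symm
  rw [kTrace, circleIntegral.integral_congr hρ.le hdiag]
  exact (congrArg (_ * ·) (hzero (right_mem_Icc.2 zero_le_one))).trans (mul_zero _)

end DiagonalTrace

/-- Stability lemma for Fredholm determinants (Lemma 2): if L₁(η,η') extends
analytically in η' to the inside of the contour, and L₂(η,η') extends analytically in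
both variables to the inside, then L₁L₂ = 0, L₂² = 0, tr L₂ = 0,
tr (L₁+L₂)ⁿ = tr L₁ⁿ for all n ≥ 1, and hence det(I−(L₁+L₂)) = det(I−L₁). -/
theorem fredholm_stability (ρ : ℝ) (hρ : 0 < ρ) (L₁ L₂ : ℂ → ℂ → ℂ)
    (hc₁ : ContinuousOn (fun P : ℂ × ℂ => L₁ P.1 P.2)
      (Metric.sphere (0 : ℂ) ρ ×ˢ Metric.sphere (0 : ℂ) ρ))
    (hc₂ : ContinuousOn (fun P : ℂ × ℂ => L₂ P.1 P.2)
      (Metric.sphere (0 : ℂ) ρ ×ˢ Metric.sphere (0 : ℂ) ρ))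
    (h₁ : ∀ η ∈ Metric.sphere (0 : ℂ) ρ, ∃ g : ℂ → ℂ,
      DifferentiableOn ℂ g (Metric.closedBall 0 ρ) ∧
        ∀ η' ∈ Metric.sphere (0 : ℂ) ρ, g η' = L₁ η η')
    (h₂ : ∃ G : ℂ → ℂ → ℂ,
      (∀ η', DifferentiableOn ℂ (fun η => G η η') (Metric.closedBall 0 ρ)) ∧
      (∀ η, DifferentiableOn ℂ (G η) (Metric.closedBall 0 ρ)) ∧
      ∀ η ∈ Metric.sphere (0 : ℂ) ρ, ∀ η' ∈ Metric.sphere (0 : ℂ) ρ,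
        G η η' = L₂ η η') :
    (∀ η ∈ Metric.sphere (0 : ℂ) ρ, ∀ η'' ∈ Metric.sphere (0 : ℂ) ρ,
        kComp ρ L₁ L₂ η η'' = 0) ∧
    (∀ η ∈ Metric.sphere (0 : ℂ) ρ, ∀ η'' ∈ Metric.sphere (0 : ℂ) ρ,
        kComp ρ L₂ L₂ η η'' = 0) ∧
    kTrace ρ L₂ = 0 ∧
    (∀ n : ℕ, kTrace ρ (kPow ρ (fun a b => L₁ a b + L₂ a b) n)
        = kTrace ρ (kPow ρ L₁ n)) ∧
    Complex.exp (-(∑' n : ℕ,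
        kTrace ρ (kPow ρ (fun a b => L₁ a b + L₂ a b) n) / ((n : ℂ) + 1)))
      = Complex.exp (-(∑' n : ℕ, kTrace ρ (kPow ρ L₁ n) / ((n : ℂ) + 1))) := by
  obtain ⟨G, hG₁, hG₂, hGL₂⟩ := h₂
  have hL₂fst : ExtendsHolomorphicallyInFst ρ L₂ := fun η' hη' =>
    ⟨fun η => G η η', hG₁ η', fun η hη => hGL₂ η hη η' hη'⟩
  have hL₂snd : ExtendsHolomorphicallyInSnd ρ L₂ := fun η hη =>
    ⟨G η, hG₂ η, fun η' hη' => hGL₂ η hη η' hη'⟩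
  have h₁₂ := kComp_eqOn_zero_of_extendsHolomorphically hρ.le h₁ hL₂fst
  have h₂₂ := kComp_eqOn_zero_of_extendsHolomorphically hρ.le hL₂snd hL₂fst
  have htr : kTrace ρ L₂ = 0 := kTrace_eq_zero_of_separately_holomorphic hρ hc₂
    (fun η' _ => hG₁ η') (fun η _ => hG₂ η) fun p hp => hGL₂ p.1 hp.1 p.2 hp.2
  have hpow := kTrace_kPow_add hρ.le hc₁ hc₂ h₁₂ h₂₂ htr
  rw [show (fun a b => L₁ a b + L₂ a b) = L₁ + L₂ from rfl]
  refine ⟨fun η hη η'' hη'' => ?_, fun η hη η'' hη'' => ?_, htr, hpow, ?_⟩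
  · simpa using h₁₂ (mk_mem_prod hη hη'')
  · simpa using h₂₂ (mk_mem_prod hη hη'')
  · simp only [hpow]
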